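/- arXiv:2406.00065 — 3 statements merged into one kernel-verified Lean document; each statement's English description precedes it below -/
import Mathlib

section
/- Let P = {x ∈ ℝⁿ : b_l + A_l·x = 0 for l ∈ L, bᵢ + Aᵢ·x ≥ 0 for i ∈ I} be a nonempty polyhedron with I finite. Then the following are equivalent: (1) there exist x ∈ ℝⁿ and t > 0 such that b_l + A_l·x = 0 for all l ∈ L and bᵢ + Aᵢ·x ≥ t for all i ∈ I; (2) for every i ∈ I there exists a point x ∈ P with bᵢ + Aᵢ·x > 0 (i.e. no inequality of I is a hidden linearity). -/
/-!
Each inequality that is not a hidden linearity is strict at some point of `P`. Since the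
constraint functions are affine and `P` is convex, the midpoint of a point where one set of
inequalities is strict and a point where another one is strict makes all of them strict, so
by induction some point of `P` is strict in every inequality of `I`; the margin `t` is the
least slack there, which is positive because `I` is finite.
-/

open Matrix

theorem Finset.exists_pos_forall_le_of_forall_pos {ι : Type*} {s : Finset ι} {g : ι → ℝ}
    (hg : ∀ i ∈ s, 0 < g i) : ∃ t, 0 < t ∧ ∀ i ∈ s, t ≤ g i := by
  rcases s.eq_empty_or_nonempty with rfl | hs
  · exact ⟨1, one_pos, by simp⟩
  · exact ⟨s.inf' hs g, (Finset.lt_inf'_iff hs).mpr hg, fun i hi => Finset.inf'_le g hi⟩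

theorem ConcaveOn.exists_forall_pos {E ι : Type*} [AddCommGroup E] [Module ℝ E] {S : Set E}
    (hS : S.Nonempty) {f : ι → E → ℝ} (I : Finset ι) (hf : ∀ i ∈ I, ConcaveOn ℝ S (f i))
    (hnonneg : ∀ i ∈ I, ∀ x ∈ S, 0 ≤ f i x) (hpos : ∀ i ∈ I, ∃ x ∈ S, 0 < f i x) :
    ∃ x ∈ S, ∀ i ∈ I, 0 < f i x := by
  classical
  induction I using Finset.induction_on with
  | empty => exact hS.imp fun x hx => ⟨hx, by simp⟩
  | insert i J _ ih =>
    obtain ⟨x, hxS, hx⟩ := ih (fun j hj => hf j (Finset.mem_insert_of_mem hj))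
      (fun j hj => hnonneg j (Finset.mem_insert_of_mem hj))
      (fun j hj => hpos j (Finset.mem_insert_of_mem hj))
    obtain ⟨y, hyS, hy⟩ := hpos i (Finset.mem_insert_self i J)
    have hmid : ∀ k ∈ insert i J,
        (1 / 2 : ℝ) * f k x + (1 / 2 : ℝ) * f k y ≤ f k ((1 / 2 : ℝ) • x + (1 / 2 : ℝ) • y) :=
      fun k hk => (hf k hk).2 hxS hyS (by norm_num) (by norm_num) (by norm_num)
    refine ⟨(1 / 2 : ℝ) • x + (1 / 2 : ℝ) • y,
      (hf i (Finset.mem_insert_self i J)).1 hxS hyS (by norm_num) (by norm_num) (by norm_num),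
      fun k hk => ?_⟩
    have hxk := hnonneg k hk x hxS
    have hyk := hnonneg k hk y hyS
    rcases Finset.mem_insert.mp hk with rfl | hkJ
    · linarith [hmid k hk]
    · linarith [hmid k hk, hx k hkJ]

section Polyhedron

variable {ι κ : Type*} [Fintype κ] (A : Matrix ι κ ℝ) (b : ι → ℝ)

theorem convex_polyhedron (L I : Finset ι) :
    Convex ℝ {x | (∀ l ∈ L, b l + A l ⬝ᵥ x = 0) ∧ ∀ i ∈ I, 0 ≤ b i + A i ⬝ᵥ x} := by
  rintro x ⟨hxL, hxI⟩ y ⟨hyL, hyI⟩ p q hp hq hpq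
  simp only [Set.mem_ofPred_eq, dotProduct_add, dotProduct_smul, smul_eq_mul]
  refine ⟨fun l hl => ?_, fun i hi => ?_⟩
  · linear_combination p * hxL l hl + q * hyL l hl - b l * hpq
  · have hsplit : b i + (p * A i ⬝ᵥ x + q * A i ⬝ᵥ y)
        = p * (b i + A i ⬝ᵥ x) + q * (b i + A i ⬝ᵥ y) := by
      linear_combination (-b i) * hpq
    rw [hsplit]
    have hxi := hxI i hi
    have hyi := hyI i hi
    positivity

theorem concaveOn_add_dotProduct {S : Set (κ → ℝ)} (hS : Convex ℝ S) (i : ι) :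
    ConcaveOn ℝ S (fun x => b i + A i ⬝ᵥ x) :=
  (concaveOn_const (b i) hS).add ((dotProductBilin ℝ ℝ (A i)).concaveOn hS)

end Polyhedron

theorem lptest_correct_general {m n : ℕ} (A : Matrix (Fin m) (Fin n) ℝ) (b : Fin m → ℝ)
    (L I : Finset (Fin m))
    (P : Set (Fin n → ℝ))
    (hP : P = {x | (∀ l ∈ L, b l + A l ⬝ᵥ x = 0) ∧ ∀ i ∈ I, 0 ≤ b i + A i ⬝ᵥ x})
    (hPne : P.Nonempty) :
    (∃ (x : Fin n → ℝ) (t : ℝ), 0 < t ∧ (∀ l ∈ L, b l + A l ⬝ᵥ x = 0) ∧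
        ∀ i ∈ I, t ≤ b i + A i ⬝ᵥ x) ↔
      (∀ i ∈ I, ∃ x ∈ P, 0 < b i + A i ⬝ᵥ x) := by
  subst hP
  constructor
  · rintro ⟨x, t, ht, hL, hI⟩ i hi
    exact ⟨x, ⟨hL, fun j hj => ht.le.trans (hI j hj)⟩, ht.trans_le (hI i hi)⟩
  · intro hstrict
    obtain ⟨x, ⟨hxL, -⟩, hx⟩ := ConcaveOn.exists_forall_pos hPne I
      (fun i _ => concaveOn_add_dotProduct A b (convex_polyhedron A b L I) i)
      (fun i hi x hx => hx.2 i hi) hstrict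
    obtain ⟨t, ht, htx⟩ := Finset.exists_pos_forall_le_of_forall_pos hx
    exact ⟨x, t, ht, hxL, htx⟩

/-- Correctness of the linearity-testing LP (5): a nonempty polyhedron
`P = {x | b l + A l ⬝ᵥ x = 0 (l ∈ L), b i + A i ⬝ᵥ x ≥ 0 (i ∈ I)}` admits a point
satisfying all inequalities of `I` strictly by a common margin `t > 0` if and only if
no inequality of `I` is a hidden linearity (each one is strict at some point of `P`). -/
theorem lptest_correct {m n : ℕ} (A : Matrix (Fin m) (Fin n) ℝ) (b : Fin m → ℝ)
    (L I : Finset (Fin m)) (hdisj : Disjoint L I) (hunion : L ∪ I = Finset.univ)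
    (P : Set (Fin n → ℝ))
    (hP : P = {x | (∀ l ∈ L, b l + A l ⬝ᵥ x = 0) ∧ ∀ i ∈ I, 0 ≤ b i + A i ⬝ᵥ x})
    (hPne : P.Nonempty) :
    (∃ (x : Fin n → ℝ) (t : ℝ), 0 < t ∧ (∀ l ∈ L, b l + A l ⬝ᵥ x = 0) ∧
        ∀ i ∈ I, t ≤ b i + A i ⬝ᵥ x) ↔
      (∀ i ∈ I, ∃ x ∈ P, 0 < b i + A i ⬝ᵥ x) :=
  lptest_correct_general A b L I P hP hPne
end

section
/- (Correctness of one step of Fourier–Motzkin elimination.) Let P = {x ∈ ℝⁿ : bᵢ + Σ_{j=1}^{n} a_{ij} x_j ≥ 0 for all i ∈ I} with I finite, and partition I into R = {i : a_{in} > 0}, S = {i : a_{in} < 0}, Z = {i : a_{in} = 0}. Let π : ℝⁿ → ℝⁿ⁻¹ delete the last coordinate. Then π(P) = { y ∈ ℝⁿ⁻¹ : bᵢ + Σ_{j=1}^{n-1} a_{ij} y_j ≥ 0 for all i ∈ Z, and (−a_{sn})(b_r + Σ_{j=1}^{n-1} a_{rj} y_j) + a_{rn}(b_s + Σ_{j=1}^{n-1}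 a_{sj} y_j) ≥ 0 for all r ∈ R, s ∈ S }. -/
open Finset

/-- One-dimensional core of Fourier–Motzkin: if the zero rows are satisfied and all
combined inequalities hold, there exists `t` satisfying every inequality `e i + d i * t ≥ 0`. -/
lemma fourier_motzkin_exists_t {m : ℕ} (d e : Fin m → ℝ)
    (hZ : ∀ i, d i = 0 → 0 ≤ e i)
    (hRS : ∀ r s, 0 < d r → d s < 0 → 0 ≤ (-(d s)) * e r + d r * e s) :
    ∃ t : ℝ, ∀ i, 0 ≤ e i + d i * t := by
  classical
  set R := Finset.univ.filter (fun r : Fin m => 0 < d r) with hRdef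
  set S := Finset.univ.filter (fun s : Fin m => d s < 0) with hSdef
  by_cases hR : R.Nonempty
  · refine ⟨R.sup' hR (fun r => -(e r) / d r), fun i => ?_⟩
    rcases lt_trichotomy (d i) 0 with hneg | hzero | hpos
    · have hpos' : (0:ℝ) < -(d i) := by linarith
      have hle : R.sup' hR (fun r => -(e r) / d r) ≤ e i / (-(d i)) := by
        apply Finset.sup'_le
        intro r hrR
        have hr : 0 < d r := by
          have := Finset.mem_filter.mp hrR; exact this.2
        have hcomb := hRS r i hr hneg
        rw [div_le_div_iff₀ hr hpos']
        nlinarith [hcomb]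
      have h2 : R.sup' hR (fun r => -(e r) / d r) * (-(d i)) ≤ e i :=
        (le_div_iff₀ hpos').mp hle
      nlinarith [h2]
    · rw [hzero]
      have := hZ i hzero
      linarith
    · have hiR : i ∈ R := by
        rw [hRdef]; exact Finset.mem_filter.mpr ⟨Finset.mem_univ i, hpos⟩
      have hle : -(e i) / d i ≤ R.sup' hR (fun r => -(e r) / d r) :=
        Finset.le_sup' (fun r => -(e r) / d r) hiR
      have h2 : -(e i) ≤ R.sup' hR (fun r => -(e r) / d r) * d i := by
        rw [← div_le_iff₀ hpos] at *
        exact hle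
      nlinarith [h2]
  · by_cases hS : S.Nonempty
    · refine ⟨S.inf' hS (fun s => e s / (-(d s))), fun i => ?_⟩
      rcases lt_trichotomy (d i) 0 with hneg | hzero | hpos
      · have hpos' : (0:ℝ) < -(d i) := by linarith
        have hiS : i ∈ S := by
          rw [hSdef]; exact Finset.mem_filter.mpr ⟨Finset.mem_univ i, hneg⟩
        have hle : S.inf' hS (fun s => e s / (-(d s))) ≤ e i / (-(d i)) :=
          Finset.inf'_le (fun s => e s / (-(d s))) hiS
        have h2 : S.inf' hS (fun s => e s / (-(d s))) * (-(d i)) ≤ e i :=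
          (le_div_iff₀ hpos').mp hle
        nlinarith [h2]
      · rw [hzero]
        have := hZ i hzero
        linarith
      · exact absurd (Finset.mem_filter.mpr ⟨Finset.mem_univ i, hpos⟩ : i ∈ R)
          (fun h => hR ⟨i, h⟩)
    · refine ⟨0, fun i => ?_⟩
      rcases lt_trichotomy (d i) 0 with hneg | hzero | hpos
      · exact absurd (Finset.mem_filter.mpr ⟨Finset.mem_univ i, hneg⟩ : i ∈ S)
          (fun h => hS ⟨i, h⟩)
      · rw [hzero]
        have := hZ i hzero
        linarith
      · exact absurd (Finset.mem_filter.mpr ⟨Finset.mem_univ i, hpos⟩ : i ∈ R)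
          (fun h => hR ⟨i, h⟩)

/-- Correctness of one step of Fourier–Motzkin elimination: projecting the polyhedron
`P = {x ∈ ℝ^(n+1) | b i + ∑ j, a i j * x j ≥ 0}` along the last coordinate yields
exactly the set described by the inequalities with zero last coefficient together with
all combined inequalities obtained from one row with positive and one row with negative
last coefficient. -/
theorem fourier_motzkin_step {m n : ℕ}
    (a : Fin m → Fin (n + 1) → ℝ) (b : Fin m → ℝ) :
    (fun x : Fin (n + 1) → ℝ => Fin.init x) ''
        {x : Fin (n + 1) → ℝ | ∀ i, 0 ≤ b i + ∑ j, a i j * x j} =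
      {y : Fin n → ℝ |
        (∀ i, a i (Fin.last n) = 0 →
          0 ≤ b i + ∑ j : Fin n, a i j.castSucc * y j) ∧
        ∀ r s, 0 < a r (Fin.last n) → a s (Fin.last n) < 0 →
          0 ≤ (-(a s (Fin.last n))) * (b r + ∑ j : Fin n, a r j.castSucc * y j) +
              a r (Fin.last n) * (b s + ∑ j : Fin n, a s j.castSucc * y j)} := by
  ext y
  simp only [Set.mem_image, Set.mem_setOf_eq]
  constructor
  · rintro ⟨x, hx, rfl⟩
    have key : ∀ i, 0 ≤ (b i + ∑ j : Fin n, a i j.castSucc * Fin.init x j)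
        + a i (Fin.last n) * x (Fin.last n) := by
      intro i
      have h := hx i
      rw [Fin.sum_univ_castSucc] at h
      simp only [Fin.init]
      linarith [h]
    refine ⟨fun i h0 => ?_, fun r s hr hs => ?_⟩
    · have := key i
      rw [h0] at this
      linarith
    · have h1 := key r
      have h2 := key s
      nlinarith [mul_nonneg (by linarith : (0:ℝ) ≤ -(a s (Fin.last n))) h1,
        mul_nonneg hr.le h2]
  · rintro ⟨hZ, hRS⟩
    obtain ⟨t, ht⟩ := fourier_motzkin_exists_t (fun i => a i (Fin.last n))
      (fun i => b i + ∑ j : Fin n, a i j.castSucc * y j) hZ hRS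
    refine ⟨Fin.snoc y t, fun i => ?_, ?_⟩
    · have h := ht i
      rw [Fin.sum_univ_castSucc]
      simp only [Fin.snoc_castSucc, Fin.snoc_last]
      linarith [h]
    · funext j
      simp
end

section
/- (Proposition 2, inequality case.) Let P = {x ∈ ℝⁿ : bᵢ + Σ_{j=1}^{n} a_{ij} x_j ≥ 0 for all i ∈ I} be such that no inequality is a hidden linearity, i.e. for every i ∈ I there is x ∈ P with bᵢ + Σⱼ a_{ij} x_j > 0. Then for every r, s ∈ I with a_{rn} > 0 and a_{sn} < 0, the combined inequality produced by Fourier–Motzkin elimination of x_n is not a hidden linearity of the projection: there exists x ∈ P with (−a_{sn})(b_r + Σⱼ a_{rj} x_j) + a_{rn}(b_s + Σⱼ a_{sj} x_j) > 0. -/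
open Finset

/-- Proposition 2, inequality case: if no inequality of
`P = {x | b i + ∑ j, a i j * x j ≥ 0}` is a hidden linearity, then no combined
inequality produced by Fourier–Motzkin elimination of the last variable is a hidden
linearity of the projection: it is strictly positive at some point of `P`. -/
theorem fm_no_hidden_linearity {m n : ℕ}
    (a : Fin m → Fin (n + 1) → ℝ) (b : Fin m → ℝ)
    (hnohid : ∀ i, ∃ x : Fin (n + 1) → ℝ,
      (∀ k, 0 ≤ b k + ∑ j, a k j * x j) ∧ 0 < b i + ∑ j, a i j * x j) :
    ∀ r s, 0 < a r (Fin.last n) → a s (Fin.last n) < 0 →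
      ∃ x : Fin (n + 1) → ℝ, (∀ k, 0 ≤ b k + ∑ j, a k j * x j) ∧
        0 < (-(a s (Fin.last n))) * (b r + ∑ j, a r j * x j) +
            a r (Fin.last n) * (b s + ∑ j, a s j * x j) := by
  intro r s hr hs
  obtain ⟨x, hx, hxr⟩ := hnohid r
  exact ⟨x, hx, add_pos_of_pos_of_nonneg
    (mul_pos (by linarith) hxr) (mul_nonneg hr.le (hx s))⟩
end
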